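/- Let f, g : [0,1] → ℝ be continuous and assume the Minkowski dimension of the graph of f over [0,1] exists. Then the upper Minkowski dimension of the graph of f + g over [0,1] is at most max{dim_M G(f), upper Minkowski dimension of G(g)}. Moreover, if dim_M G(f) ≠ the upper Minkowski dimension of G(g), equality holds. -/

import Mathlib

set_option maxHeartbeats 1000000

open Filter Metric Set
open scoped Topology

/-- Minimal number of closed balls of radius `ε` needed to cover `A`. -/
noncomputable def covNum {E : Type*} [PseudoMetricSpace E] (A : Set E) (ε : ℝ) : ℕ :=
  sInf {n : ℕ | ∃ s : Finset E, s.card = n ∧ A ⊆ ⋃ x ∈ s, Metric.closedBall x ε}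

/-- Upper Minkowski (box) dimension. -/
noncomputable def udim {E : Type*} [PseudoMetricSpace E] (A : Set E) : ℝ :=
  limsup (fun ε : ℝ => Real.log (covNum A ε) / Real.log (1 / ε)) (𝓝[>] 0)

/-- Lower Minkowski (box) dimension. -/
noncomputable def ldim {E : Type*} [PseudoMetricSpace E] (A : Set E) : ℝ :=
  liminf (fun ε : ℝ => Real.log (covNum A ε) / Real.log (1 / ε)) (𝓝[>] 0)

/-- The graph of `h` over a set `A` of times. -/
def graphOver {E : Type*} (h : ℝ → E) (A : Set ℝ) : Set (ℝ × E) :=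
  (fun t => (t, h t)) '' A

lemma covNum_le_card {E : Type*} [PseudoMetricSpace E] {A : Set E} {ε : ℝ} (s : Finset E)
    (h : A ⊆ ⋃ x ∈ s, Metric.closedBall x ε) : covNum A ε ≤ s.card :=
  Nat.sInf_le ⟨s, rfl, h⟩

lemma exists_cover {E : Type*} [PseudoMetricSpace E] {A : Set E} (hA : IsCompact A) {ε : ℝ}
    (hε : 0 < ε) : ∃ s : Finset E, s.card = covNum A ε ∧ A ⊆ ⋃ x ∈ s, Metric.closedBall x ε := by
  have hne : {n : ℕ | ∃ s : Finset E, s.card = n ∧ A ⊆ ⋃ x ∈ s, Metric.closedBall x ε}.Nonempty := by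
    obtain ⟨t, -, htf, ht⟩ := hA.finite_cover_balls hε
    refine ⟨htf.toFinset.card, htf.toFinset, rfl, ht.trans ?_⟩
    refine Set.iUnion₂_subset fun x hx => ?_
    exact Set.subset_iUnion₂_of_subset x (by simpa using hx) ball_subset_closedBall
  obtain ⟨s, hs, hcov⟩ := Nat.sInf_mem hne
  exact ⟨s, hs, hcov⟩

lemma one_le_covNum {E : Type*} [PseudoMetricSpace E] {A : Set E} (hA : IsCompact A)
    (hne : A.Nonempty) {ε : ℝ} (hε : 0 < ε) : 1 ≤ covNum A ε := by
  obtain ⟨s, hs, hcov⟩ := exists_cover hA hε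
  rcases hne with ⟨a, ha⟩
  by_contra h
  push_neg at h
  interval_cases h' : covNum A ε
  · rw [Finset.card_eq_zero] at hs
    subst hs
    simpa using hcov ha

lemma covNum_image_le {E F : Type*} [PseudoMetricSpace E] [PseudoMetricSpace F] {A : Set E}
    (hA : IsCompact A) {φ : E → F} (hφ : ∀ x y, dist (φ x) (φ y) ≤ dist x y) {ε : ℝ}
    (hε : 0 < ε) : covNum (φ '' A) ε ≤ covNum A ε := by
  classical
  obtain ⟨s, hs, hcov⟩ := exists_cover hA hε
  rw [← hs]
  refine le_trans (covNum_le_card (s.image φ) ?_) (Finset.card_image_le)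
  rintro - ⟨a, ha, rfl⟩
  obtain ⟨x, hx, hax⟩ := Set.mem_iUnion₂.1 (hcov ha)
  refine Set.mem_iUnion₂.2 ⟨φ x, Finset.mem_image_of_mem φ hx, ?_⟩
  exact le_trans (hφ a x) (by simpa [Metric.mem_closedBall] using hax)

/-- 1-D covering of an interval by n closed balls of radius ε -/
lemma cover1d {ε : ℝ} (hε : 0 < ε) {c d : ℝ} {n : ℕ} (hn : 1 ≤ n) (h : d - c ≤ 2 * ε * n)
    {x : ℝ} (hx : x ∈ Set.Icc c d) :
    ∃ j < n, |x - (c + (2 * j + 1) * ε)| ≤ ε := by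
  obtain ⟨hcx, hxd⟩ := hx
  set j := min (⌊(x - c) / (2 * ε)⌋₊) (n - 1) with hj
  refine ⟨j, lt_of_le_of_lt (min_le_right _ _) (by omega), ?_⟩
  rw [abs_le]
  have h2ε : (0:ℝ) < 2 * ε := by linarith
  have hlow : (j : ℝ) * (2 * ε) ≤ x - c := by
    calc (j : ℝ) * (2 * ε) ≤ (⌊(x - c) / (2 * ε)⌋₊ : ℝ) * (2 * ε) := by
          gcongr; exact_mod_cast min_le_left _ _
    _ ≤ (x - c) / (2 * ε) * (2 * ε) := by gcongr; exact Nat.floor_le (div_nonneg (by linarith) (by linarith))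
    _ = x - c := by field_simp
  have hup : x - c ≤ ((j : ℝ) + 1) * (2 * ε) := by
    rcases le_total (⌊(x - c) / (2 * ε)⌋₊) (n - 1) with hc1 | hc1
    · have : j = ⌊(x - c) / (2 * ε)⌋₊ := by rw [hj, min_eq_left hc1]
      rw [this]
      have := Nat.lt_floor_add_one ((x - c) / (2 * ε))
      have := (div_lt_iff₀ h2ε).1 this
      linarith
    · have : j = n - 1 := by rw [hj, min_eq_right hc1]
      rw [this]
      have : ((n - 1 : ℕ) : ℝ) + 1 = (n : ℝ) := by
        have : (1:ℕ) ≤ n := hn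
        push_cast [Nat.cast_sub this]
        ring
      rw [this]
      linarith
  constructor <;> push_cast <;> nlinarith

/-- length bound from a finite cover by intervals of length 2ε -/
lemma length_le_of_cover {ε : ℝ} (hε : 0 < ε) {c d : ℝ} (s : Finset ℝ)
    (h : Set.Icc c d ⊆ ⋃ y ∈ s, Set.Icc (y - ε) (y + ε)) :
    d - c ≤ 2 * ε * s.card := by
  rcases le_total d c with hdc | hcd
  · nlinarith [s.card.cast_nonneg (α := ℝ)]
  · have hm : (MeasureTheory.volume (Set.Icc c d)) ≤
        ∑ y ∈ s, MeasureTheory.volume (Set.Icc (y - ε) (y + ε)) :=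
      le_trans (MeasureTheory.measure_mono h) (MeasureTheory.measure_biUnion_finset_le s _)
    rw [Real.volume_Icc] at hm
    have : ∀ y ∈ s, MeasureTheory.volume (Set.Icc (y - ε) (y + ε)) = ENNReal.ofReal (2*ε) := by
      intro y _; rw [Real.volume_Icc]; ring_nf
    rw [Finset.sum_congr rfl this, Finset.sum_const, nsmul_eq_mul,
      ← ENNReal.ofReal_natCast, ← ENNReal.ofReal_mul (by positivity)] at hm
    have := (ENNReal.ofReal_le_ofReal_iff (by positivity)).1 hm
    linarith

lemma three_columns {ε : ℝ} (hε : 0 < ε) (K : ℕ) (x : ℝ) :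
    ((Finset.range K).filter (fun k : ℕ => |x - (2 * (k:ℝ) + 1) * ε| ≤ 2 * ε)).card ≤ 3 := by
  classical
  set F := (Finset.range K).filter (fun k : ℕ => |x - (2 * (k:ℝ) + 1) * ε| ≤ 2 * ε) with hF
  rcases F.eq_empty_or_nonempty with h | h
  · simp [h]
  · set k0 := F.min' h with hk0
    have hsub : F ⊆ Finset.Icc k0 (k0 + 2) := by
      intro k hk
      have h1 : |x - (2 * k + 1) * ε| ≤ 2 * ε := by
        have := Finset.mem_filter.1 hk; exact this.2
      have h0 : |x - (2 * k0 + 1) * ε| ≤ 2 * ε := by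
        have := Finset.mem_filter.1 (F.min'_mem h); exact this.2
      rw [abs_le] at h1 h0
      have hk0le : k0 ≤ k := F.min'_le k hk
      have : (k : ℝ) ≤ (k0 : ℝ) + 2 := by nlinarith
      have hk2 : k ≤ k0 + 2 := by
        by_contra hcon
        push_neg at hcon
        have : ((k0:ℝ)) + 2 < (k:ℝ) := by exact_mod_cast hcon
        linarith
      exact Finset.mem_Icc.2 ⟨hk0le, hk2⟩
    calc F.card ≤ (Finset.Icc k0 (k0+2)).card := Finset.card_le_card hsub
      _ = 3 := by rw [Nat.card_Icc]; omega

lemma sum_filter_card_le {ε : ℝ} (hε : 0 < ε) (K : ℕ) (s : Finset (ℝ × ℝ)) :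
    ∑ k ∈ Finset.range K, ((s.filter (fun p => |p.1 - (2 * (k:ℝ) + 1) * ε| ≤ 2 * ε)).card)
      ≤ 3 * s.card := by
  classical
  have : ∀ k ∈ Finset.range K, (s.filter (fun p => |p.1 - (2 * (k:ℝ) + 1) * ε| ≤ 2 * ε)).card
      = ∑ p ∈ s, if |p.1 - (2 * (k:ℝ) + 1) * ε| ≤ 2 * ε then 1 else 0 := by
    intro k _; rw [Finset.card_filter]
  rw [Finset.sum_congr rfl this, Finset.sum_comm]
  calc ∑ p ∈ s, ∑ k ∈ Finset.range K, (if |p.1 - (2 * (k:ℝ) + 1) * ε| ≤ 2 * ε then 1 else 0)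
      ≤ ∑ p ∈ s, 3 := by
        refine Finset.sum_le_sum fun p _ => ?_
        rw [← Finset.card_filter]
        exact three_columns hε K p.1
    _ = 3 * s.card := by rw [Finset.sum_const]; ring

lemma graph_compact {h : ℝ → ℝ} (hh : ContinuousOn h (Set.Icc 0 1)) :
    IsCompact (graphOver h (Set.Icc 0 1)) :=
  isCompact_Icc.image_of_continuousOn (continuousOn_id.prodMk hh)

lemma graph_nonempty (h : ℝ → ℝ) : (graphOver h (Set.Icc 0 1)).Nonempty :=
  ⟨(0, h 0), ⟨0, by simp, rfl⟩⟩

/-- Projection bound: `1 ≤ 2ε · covNum (G h) ε`. -/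
lemma proj_bound {h : ℝ → ℝ} (hh : ContinuousOn h (Set.Icc 0 1)) {ε : ℝ} (hε : 0 < ε)
    {s : Finset (ℝ × ℝ)} (hcov : graphOver h (Set.Icc 0 1) ⊆ ⋃ x ∈ s, Metric.closedBall x ε) :
    1 ≤ 2 * ε * s.card := by
  classical
  have hsub : Set.Icc (0:ℝ) 1 ⊆ ⋃ y ∈ s.image Prod.fst, Set.Icc (y - ε) (y + ε) := by
    intro t ht
    have : (t, h t) ∈ graphOver h (Set.Icc 0 1) := ⟨t, ht, rfl⟩
    obtain ⟨p, hp, hpt⟩ := Set.mem_iUnion₂.1 (hcov this)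
    refine Set.mem_iUnion₂.2 ⟨p.1, Finset.mem_image_of_mem _ hp, ?_⟩
    have : dist (t, h t) p ≤ ε := hpt
    rw [Prod.dist_eq] at this
    have h1 : dist t p.1 ≤ ε := le_trans (le_max_left _ _) this
    rw [Real.dist_eq, abs_le] at h1
    constructor <;> linarith [h1.1, h1.2]
  have := length_le_of_cover hε (s.image Prod.fst) hsub
  have hc : ((s.image Prod.fst).card : ℝ) ≤ s.card := by exact_mod_cast Finset.card_image_le
  nlinarith

lemma key_count (f g : ℝ → ℝ) (hf : ContinuousOn f (Set.Icc 0 1))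
    (hg : ContinuousOn g (Set.Icc 0 1)) {ε : ℝ} (hε : 0 < ε) :
    (covNum (graphOver (f + g) (Set.Icc 0 1)) ε : ℝ) ≤
      8 * max (covNum (graphOver f (Set.Icc 0 1)) ε) (covNum (graphOver g (Set.Icc 0 1)) ε) := by
  classical
  obtain ⟨sf, hsfcard, hsfcov⟩ := exists_cover (graph_compact hf) hε
  obtain ⟨sg, hsgcard, hsgcov⟩ := exists_cover (graph_compact hg) hε
  set Nf := covNum (graphOver f (Set.Icc 0 1)) ε with hNf
  set Ng := covNum (graphOver g (Set.Icc 0 1)) ε with hNg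
  have hNf1 : 1 ≤ Nf := one_le_covNum (graph_compact hf) (graph_nonempty f) hε
  have hNfR : 1 ≤ 2 * ε * Nf := by
    have := proj_bound hf hε hsfcov; rw [hsfcard] at this; exact this
  set K := ⌈1 / (2 * ε)⌉₊ with hK
  have h2ε : (0:ℝ) < 2 * ε := by linarith
  have hK1 : 1 ≤ K := Nat.one_le_iff_ne_zero.2 (by
    simp only [hK, ne_eq, Nat.ceil_eq_zero, not_le]
    positivity)
  have hK2 : 1 ≤ 2 * ε * K := by
    have := Nat.le_ceil (1 / (2 * ε))
    rw [← hK] at this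
    calc (1:ℝ) = 2 * ε * (1 / (2 * ε)) := by field_simp
    _ ≤ 2 * ε * K := by gcongr
  have hKle : (K : ℝ) ≤ 1 / (2 * ε) + 1 := by
    have := Nat.ceil_lt_add_one (le_of_lt (show (0:ℝ) < 1 / (2*ε) by positivity))
    rw [← hK] at this
    linarith
  -- columns
  set lo : ℕ → ℝ := fun k => 2 * ε * k with hlo
  set hi : ℕ → ℝ := fun k => min (2 * ε * (k + 1)) 1 with hhi
  have hlohi : ∀ k < K, lo k ≤ hi k := by
    intro k hk
    have hkK : (k : ℝ) ≤ (K : ℝ) - 1 := by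
      have : k + 1 ≤ K := hk
      have : ((k:ℝ) + 1) ≤ (K:ℝ) := by exact_mod_cast this
      linarith
    have h3 : 2 * ε * (K:ℝ) ≤ 1 + 2 * ε := by
      calc 2 * ε * (K:ℝ) ≤ 2 * ε * (1 / (2 * ε) + 1) := by gcongr
      _ = 1 + 2 * ε := by field_simp
    have h1 : lo k ≤ 1 := by
      simp only [hlo]
      nlinarith
    exact le_min (by simp only [hlo]; nlinarith [hε.le, Nat.cast_nonneg (α := ℝ) k]) h1
  have hJsub : ∀ k, Set.Icc (lo k) (hi k) ⊆ Set.Icc (0:ℝ) 1 := by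
    intro k x hx
    refine ⟨le_trans ?_ hx.1, le_trans hx.2 (min_le_right _ _)⟩
    simp only [hlo]; positivity
  -- oscillation data
  set cf : ℕ → ℝ := fun k => sInf (f '' Set.Icc (lo k) (hi k)) with hcf
  set df : ℕ → ℝ := fun k => sSup (f '' Set.Icc (lo k) (hi k)) with hdf
  set cg : ℕ → ℝ := fun k => sInf (g '' Set.Icc (lo k) (hi k)) with hcg
  set dg : ℕ → ℝ := fun k => sSup (g '' Set.Icc (lo k) (hi k)) with hdg
  have himf : ∀ k < K, f '' Set.Icc (lo k) (hi k) = Set.Icc (cf k) (df k) := by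
    intro k hk
    exact ContinuousOn.image_Icc (hlohi k hk) (hf.mono (hJsub k))
  have himg : ∀ k < K, g '' Set.Icc (lo k) (hi k) = Set.Icc (cg k) (dg k) := by
    intro k hk
    exact ContinuousOn.image_Icc (hlohi k hk) (hg.mono (hJsub k))
  set a : ℕ → ℕ := fun k => (sf.filter (fun p => |p.1 - (2 * (k:ℝ) + 1) * ε| ≤ 2 * ε)).card
    with ha
  set b : ℕ → ℕ := fun k => (sg.filter (fun p => |p.1 - (2 * (k:ℝ) + 1) * ε| ≤ 2 * ε)).card
    with hb
  -- oscillation bound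
  have hosc : ∀ (h : ℝ → ℝ) (s : Finset (ℝ × ℝ)),
      graphOver h (Set.Icc 0 1) ⊆ (⋃ x ∈ s, Metric.closedBall x ε) →
      ∀ k < K, ∀ c' d' : ℝ, h '' Set.Icc (lo k) (hi k) = Set.Icc c' d' →
      d' - c' ≤ 2 * ε * ((s.filter (fun p => |p.1 - (2 * (k:ℝ) + 1) * ε| ≤ 2 * ε)).card) := by
    intro h s hcov k hk c' d' him
    set sk := s.filter (fun p => |p.1 - (2 * (k:ℝ) + 1) * ε| ≤ 2 * ε) with hsk
    have hsub : Set.Icc c' d' ⊆ ⋃ y ∈ sk.image Prod.snd, Set.Icc (y - ε) (y + ε) := by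
      intro y hy
      rw [← him] at hy
      obtain ⟨t, htJ, rfl⟩ := hy
      have htI : t ∈ Set.Icc (0:ℝ) 1 := hJsub k htJ
      obtain ⟨p, hp, hpt⟩ := Set.mem_iUnion₂.1 (hcov ⟨t, htI, rfl⟩)
      have hdist : dist (t, h t) p ≤ ε := hpt
      rw [Prod.dist_eq, max_le_iff, Real.dist_eq, Real.dist_eq] at hdist
      have hpk : p ∈ sk := by
        rw [hsk, Finset.mem_filter]
        refine ⟨hp, ?_⟩
        have ht1 : lo k ≤ t := htJ.1
        have ht2 : t ≤ 2 * ε * (k + 1) := le_trans htJ.2 (min_le_left _ _)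
        rw [abs_le]
        simp only [hlo] at ht1
        have := abs_le.1 hdist.1
        constructor <;> nlinarith [this.1, this.2]
      refine Set.mem_iUnion₂.2 ⟨p.2, Finset.mem_image_of_mem _ hpk, ?_⟩
      have := abs_le.1 hdist.2
      exact ⟨by linarith [this.1, this.2], by linarith [this.1, this.2]⟩
    have := length_le_of_cover hε (sk.image Prod.snd) hsub
    have hcard : ((sk.image Prod.snd).card : ℝ) ≤ sk.card := by
      exact_mod_cast Finset.card_image_le
    nlinarith
  have hoscf : ∀ k < K, df k - cf k ≤ 2 * ε * a k := fun k hk =>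
    hosc f sf hsfcov k hk (cf k) (df k) (himf k hk)
  have hoscg : ∀ k < K, dg k - cg k ≤ 2 * ε * b k := fun k hk =>
    hosc g sg hsgcov k hk (cg k) (dg k) (himg k hk)
  -- the covering finset
  set T : Finset (ℝ × ℝ) := (Finset.range K).biUnion (fun k =>
    (Finset.range (a k + b k + 1)).image (fun j : ℕ =>
      (((2 * (k:ℝ) + 1) * ε), cf k + cg k + (2 * (j:ℝ) + 1) * ε))) with hT
  have hcovT : graphOver (f + g) (Set.Icc 0 1) ⊆ ⋃ x ∈ T, Metric.closedBall x ε := by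
    rintro - ⟨t, ht, rfl⟩
    obtain ⟨k, hkK, hkt⟩ := cover1d hε hK1 (by linarith : (1:ℝ) - 0 ≤ 2 * ε * K)
      (by simpa using ht)
    rw [zero_add] at hkt
    have htJ : t ∈ Set.Icc (lo k) (hi k) := by
      have := abs_le.1 hkt
      refine ⟨?_, le_min ?_ ht.2⟩
      · simp only [hlo]; nlinarith [this.1]
      · nlinarith [this.2]
    have hft : f t ∈ Set.Icc (cf k) (df k) := by
      rw [← himf k hkK]; exact ⟨t, htJ, rfl⟩
    have hgt : g t ∈ Set.Icc (cg k) (dg k) := by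
      rw [← himg k hkK]; exact ⟨t, htJ, rfl⟩
    have hsum : (f + g) t ∈ Set.Icc (cf k + cg k) (df k + dg k) := by
      simp only [Pi.add_apply]
      exact ⟨add_le_add hft.1 hgt.1, add_le_add hft.2 hgt.2⟩
    have hheight : (df k + dg k) - (cf k + cg k) ≤ 2 * ε * ((a k + b k + 1 : ℕ) : ℝ) := by
      push_cast
      have := hoscf k hkK
      have := hoscg k hkK
      nlinarith
    obtain ⟨j, hjn, hjy⟩ := cover1d hε (by omega : 1 ≤ a k + b k + 1) hheight hsum
    refine Set.mem_iUnion₂.2 ⟨((2 * (k:ℝ) + 1) * ε, cf k + cg k + (2 * (j:ℝ) + 1) * ε), ?_, ?_⟩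
    · rw [hT]
      refine Finset.mem_biUnion.2 ⟨k, Finset.mem_range.2 hkK, ?_⟩
      exact Finset.mem_image.2 ⟨j, Finset.mem_range.2 hjn, rfl⟩
    · rw [Metric.mem_closedBall, Prod.dist_eq, max_le_iff, Real.dist_eq, Real.dist_eq]
      exact ⟨hkt, hjy⟩
  -- cardinality bound
  have hTcard : T.card ≤ 3 * Nf + 3 * Ng + K := by
    calc T.card ≤ ∑ k ∈ Finset.range K, ((Finset.range (a k + b k + 1)).image (fun j : ℕ =>
          (((2 * (k:ℝ) + 1) * ε), cf k + cg k + (2 * (j:ℝ) + 1) * ε))).card :=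
        Finset.card_biUnion_le
    _ ≤ ∑ k ∈ Finset.range K, (a k + b k + 1) := by
        refine Finset.sum_le_sum fun k _ => ?_
        exact le_trans Finset.card_image_le (by simp)
    _ = (∑ k ∈ Finset.range K, a k) + (∑ k ∈ Finset.range K, b k) + K := by
        simp [Finset.sum_add_distrib]
    _ ≤ 3 * Nf + 3 * Ng + K := by
        have h1 := sum_filter_card_le hε K sf
        have h2 := sum_filter_card_le hε K sg
        rw [hsfcard] at h1; rw [hsgcard] at h2
        have h1' : ∑ k ∈ Finset.range K, a k ≤ 3 * Nf := by simp only [ha]; exact h1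
        have h2' : ∑ k ∈ Finset.range K, b k ≤ 3 * Ng := by simp only [hb]; exact h2
        omega
  -- final chain
  have hcov : (covNum (graphOver (f + g) (Set.Icc 0 1)) ε : ℝ) ≤ 3 * Nf + 3 * Ng + K := by
    have := covNum_le_card T hcovT
    have h2 : covNum (graphOver (f + g) (Set.Icc 0 1)) ε ≤ 3 * Nf + 3 * Ng + K :=
      le_trans this hTcard
    exact_mod_cast h2
  have hKN : (K : ℝ) ≤ 2 * Nf := by
    have hNfhalf : 1 / (2 * ε) ≤ (Nf : ℝ) := by
      rw [div_le_iff₀ h2ε]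
      nlinarith
    have : (1:ℝ) ≤ Nf := by exact_mod_cast hNf1
    linarith
  have hmaxf : (Nf : ℝ) ≤ max (Nf : ℝ) (Ng : ℝ) := le_max_left _ _
  have hmaxg : (Ng : ℝ) ≤ max (Nf : ℝ) (Ng : ℝ) := le_max_right _ _
  have hcast : ((Nf ⊔ Ng : ℕ) : ℝ) = (Nf : ℝ) ⊔ (Ng : ℝ) := Nat.cast_max Nf Ng
  rw [hcast]
  linarith

/-- Cover a subset of a rectangle by a grid of balls. -/
lemma covNum_rect {A : Set (ℝ × ℝ)} {c1 d1 c2 d2 ε : ℝ} (hε : 0 < ε)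
    (hA : A ⊆ Set.Icc c1 d1 ×ˢ Set.Icc c2 d2) {n m : ℕ} (hn : 1 ≤ n) (hm : 1 ≤ m)
    (h1 : d1 - c1 ≤ 2 * ε * n) (h2 : d2 - c2 ≤ 2 * ε * m) :
    covNum A ε ≤ n * m := by
  classical
  set T : Finset (ℝ × ℝ) := (Finset.range n ×ˢ Finset.range m).image
    (fun q : ℕ × ℕ => (c1 + (2 * (q.1:ℝ) + 1) * ε, c2 + (2 * (q.2:ℝ) + 1) * ε)) with hT
  have hcov : A ⊆ ⋃ x ∈ T, Metric.closedBall x ε := by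
    intro p hp
    obtain ⟨hp1, hp2⟩ := hA hp
    obtain ⟨i, hin, hi⟩ := cover1d hε hn h1 hp1
    obtain ⟨j, hjm, hj⟩ := cover1d hε hm h2 hp2
    refine Set.mem_iUnion₂.2 ⟨(c1 + (2 * (i:ℝ) + 1) * ε, c2 + (2 * (j:ℝ) + 1) * ε), ?_, ?_⟩
    · exact Finset.mem_image.2 ⟨(i, j), Finset.mem_product.2
        ⟨Finset.mem_range.2 hin, Finset.mem_range.2 hjm⟩, rfl⟩
    · rw [Metric.mem_closedBall, Prod.dist_eq, max_le_iff, Real.dist_eq, Real.dist_eq]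
      exact ⟨hi, hj⟩
  calc covNum A ε ≤ T.card := covNum_le_card T hcov
    _ ≤ (Finset.range n ×ˢ Finset.range m).card := Finset.card_image_le
    _ = n * m := by simp

/-- eventual bounds on the dimension quotient -/
lemma u_bounds {h : ℝ → ℝ} (hh : ContinuousOn h (Set.Icc 0 1)) :
    ∀ᶠ ε in 𝓝[>] (0:ℝ),
      0 ≤ Real.log (covNum (graphOver h (Set.Icc 0 1)) ε) / Real.log (1 / ε) ∧
      Real.log (covNum (graphOver h (Set.Icc 0 1)) ε) / Real.log (1 / ε) ≤ 3 := by
  obtain ⟨C, hC⟩ := isCompact_Icc.exists_bound_of_continuousOn hh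
  set R : ℝ := max C 0 with hR
  have hR0 : 0 ≤ R := le_max_right _ _
  have hmem : Set.Ioo (0:ℝ) (min 1 (1 / (R + 4) ^ 2)) ∈ 𝓝[>] (0:ℝ) := by
    apply Ioo_mem_nhdsGT_of_mem
    constructor
    · rfl
    · positivity
  filter_upwards [hmem] with ε hε
  obtain ⟨hε0, hεlt⟩ := hε
  have hε1 : ε < 1 := lt_of_lt_of_le hεlt (min_le_left _ _)
  have hε2 : ε < 1 / (R + 4) ^ 2 := lt_of_lt_of_le hεlt (min_le_right _ _)
  have hL : Real.log ((R + 4) ^ 2) ≤ Real.log (1 / ε) := by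
    apply Real.log_le_log (by positivity)
    rw [le_div_iff₀ hε0]
    have := (lt_div_iff₀ (show (0:ℝ) < (R+4)^2 by positivity)).1 hε2
    nlinarith
  have hL2 : Real.log ((R + 4) ^ 2) = 2 * Real.log (R + 4) := by
    rw [Real.log_pow]; push_cast; ring
  have hlogR : (0:ℝ) < Real.log (R + 4) := by
    apply Real.log_pos; linarith
  have hLpos : 0 < Real.log (1 / ε) := by
    apply Real.log_pos
    rw [lt_div_iff₀ hε0]; linarith
  set N := covNum (graphOver h (Set.Icc 0 1)) ε with hN
  have hN1 : 1 ≤ N := one_le_covNum (graph_compact hh) (graph_nonempty h) hε0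
  have hN1R : (1:ℝ) ≤ (N:ℝ) := by exact_mod_cast hN1
  constructor
  · apply div_nonneg _ hLpos.le
    exact Real.log_nonneg hN1R
  · -- upper bound via rectangle
    set n := ⌈(R + 3) / ε⌉₊ with hn
    have hn1 : 1 ≤ n := Nat.one_le_iff_ne_zero.2 (by
      simp only [hn, ne_eq, Nat.ceil_eq_zero, not_le]
      positivity)
    have hnge : (R + 3) / ε ≤ (n:ℝ) := Nat.le_ceil _
    have hnle : (n:ℝ) ≤ (R + 4) / ε := by
      have := Nat.ceil_lt_add_one (show (0:ℝ) ≤ (R+3)/ε by positivity)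
      have h2 : (R + 3) / ε + 1 ≤ (R + 4) / ε := by
        rw [div_add' _ _ _ (ne_of_gt hε0)]
        exact div_le_div_of_nonneg_right (by linarith) hε0.le
      linarith [this]
    have hsub : graphOver h (Set.Icc 0 1) ⊆ Set.Icc 0 1 ×ˢ Set.Icc (-R) R := by
      rintro - ⟨t, ht, rfl⟩
      refine ⟨ht, ?_⟩
      have := hC t ht
      rw [Real.norm_eq_abs, abs_le] at this
      constructor
      · simp only []; linarith [this.1, le_max_left C 0]
      · simp only []; linarith [this.2, le_max_left C 0]
    have hcovle : N ≤ n * n := by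
      rw [hN]
      apply covNum_rect hε0 hsub hn1 hn1
      · have : (1:ℝ) ≤ 2 * (R + 3) := by linarith
        calc (1:ℝ) - 0 = 1 := by ring
        _ ≤ 2 * (R + 3) := this
        _ = 2 * ε * ((R+3)/ε) := by field_simp
        _ ≤ 2 * ε * n := by gcongr
      · calc R - (-R) = 2 * R := by ring
        _ ≤ 2 * ε * ((R+3)/ε) := by rw [show 2 * ε * ((R+3)/ε) = 2*(R+3) by field_simp]; linarith
        _ ≤ 2 * ε * n := by gcongr
    have hlogN : Real.log N ≤ 3 * Real.log (1 / ε) := by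
      have hNle : (N:ℝ) ≤ ((R + 4) / ε) ^ 2 := by
        calc (N:ℝ) ≤ (n:ℝ) * (n:ℝ) := by exact_mod_cast hcovle
        _ ≤ ((R+4)/ε) * ((R+4)/ε) := by
            apply mul_le_mul hnle hnle (by positivity) (by positivity)
        _ = ((R + 4) / ε) ^ 2 := by ring
      have := Real.log_le_log (by positivity : (0:ℝ) < N) hNle
      have heq : Real.log (((R + 4) / ε) ^ 2) = 2 * Real.log (R + 4) + 2 * Real.log (1 / ε) := by
        rw [Real.log_pow]
        push_cast
        rw [Real.log_div (by positivity) (ne_of_gt hε0), one_div, Real.log_inv]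
        ring
      rw [heq] at this
      have h2L : 2 * Real.log (R + 4) ≤ Real.log (1 / ε) := by rw [hL2] at hL; linarith
      linarith
    rw [div_le_iff₀ hLpos]
    linarith

lemma covNum_graph_neg (g : ℝ → ℝ) (hg : ContinuousOn g (Set.Icc 0 1)) {ε : ℝ} (hε : 0 < ε) :
    covNum (graphOver (-g) (Set.Icc 0 1)) ε = covNum (graphOver g (Set.Icc 0 1)) ε := by
  set φ : ℝ × ℝ → ℝ × ℝ := fun p => (p.1, -p.2) with hφdef
  have hφ : ∀ x y : ℝ × ℝ, dist (φ x) (φ y) ≤ dist x y := by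
    intro x y
    simp only [hφdef, Prod.dist_eq, Real.dist_eq]
    apply le_of_eq
    congr 1
    rw [show -x.2 - -y.2 = -(x.2 - y.2) by ring, abs_neg]
  have him : ∀ h : ℝ → ℝ, φ '' graphOver h (Set.Icc 0 1) = graphOver (-h) (Set.Icc 0 1) := by
    intro h
    simp only [graphOver, Set.image_image, hφdef]
    rfl
  have h1 : covNum (graphOver (-g) (Set.Icc 0 1)) ε ≤ covNum (graphOver g (Set.Icc 0 1)) ε := by
    rw [← him g]
    exact covNum_image_le (graph_compact hg) hφ hε
  have h2 : covNum (graphOver g (Set.Icc 0 1)) ε ≤ covNum (graphOver (-g) (Set.Icc 0 1)) ε := by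
    have : graphOver g (Set.Icc 0 1) = φ '' graphOver (-g) (Set.Icc 0 1) := by
      rw [him (-g), neg_neg]
    rw [this]
    exact covNum_image_le (graph_compact (hg.neg)) hφ hε
  omega

lemma udim_graph_neg (g : ℝ → ℝ) (hg : ContinuousOn g (Set.Icc 0 1)) :
    udim (graphOver (-g) (Set.Icc 0 1)) = udim (graphOver g (Set.Icc 0 1)) := by
  apply Filter.limsup_congr
  filter_upwards [self_mem_nhdsWithin] with ε hε
  rw [covNum_graph_neg g hg hε]

lemma udim_add_le_max (f g : ℝ → ℝ) (hf : ContinuousOn f (Set.Icc 0 1))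
    (hg : ContinuousOn g (Set.Icc 0 1)) :
    udim (graphOver (f + g) (Set.Icc 0 1)) ≤
      max (udim (graphOver f (Set.Icc 0 1))) (udim (graphOver g (Set.Icc 0 1))) := by
  set u1 : ℝ → ℝ := fun ε => Real.log (covNum (graphOver f (Set.Icc 0 1)) ε) / Real.log (1/ε)
    with hu1
  set u2 : ℝ → ℝ := fun ε => Real.log (covNum (graphOver g (Set.Icc 0 1)) ε) / Real.log (1/ε)
    with hu2
  set u12 : ℝ → ℝ :=
    fun ε => Real.log (covNum (graphOver (f + g) (Set.Icc 0 1)) ε) / Real.log (1/ε) with hu12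
  have hb1 := u_bounds hf
  have hb2 := u_bounds hg
  have hb12 := u_bounds (hf.add hg)
  have hB1 : IsBoundedUnder (· ≤ ·) (𝓝[>] (0:ℝ)) u1 :=
    ⟨3, Filter.eventually_map.2 (by filter_upwards [hb1] with ε h using h.2)⟩
  have hB2 : IsBoundedUnder (· ≤ ·) (𝓝[>] (0:ℝ)) u2 :=
    ⟨3, Filter.eventually_map.2 (by filter_upwards [hb2] with ε h using h.2)⟩
  have hCo : IsCoboundedUnder (· ≤ ·) (𝓝[>] (0:ℝ)) u12 := by
    apply isCoboundedUnder_le_of_eventually_le (𝓝[>] (0:ℝ)) (x := 0)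
    filter_upwards [hb12] with ε h using h.1
  set M := max (udim (graphOver f (Set.Icc 0 1))) (udim (graphOver g (Set.Icc 0 1))) with hM
  have key : ∀ δ : ℝ, 0 < δ → limsup u12 (𝓝[>] (0:ℝ)) ≤ M + 2 * δ := by
    intro δ hδ
    have hev1 : ∀ᶠ ε in 𝓝[>] (0:ℝ), u1 ε < udim (graphOver f (Set.Icc 0 1)) + δ :=
      eventually_lt_of_limsup_lt (by simp only [udim]; linarith) hB1
    have hev2 : ∀ᶠ ε in 𝓝[>] (0:ℝ), u2 ε < udim (graphOver g (Set.Icc 0 1)) + δ :=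
      eventually_lt_of_limsup_lt (by simp only [udim]; linarith) hB2
    have hT : Tendsto (fun ε : ℝ => Real.log (1/ε)) (𝓝[>] (0:ℝ)) atTop := by
      have h1 : Tendsto (fun ε : ℝ => ε⁻¹) (𝓝[>] (0:ℝ)) atTop := tendsto_inv_nhdsGT_zero
      exact (Real.tendsto_log_atTop.comp h1).congr (fun ε => by
        simp [Function.comp, one_div])
    have hev3 : ∀ᶠ ε in 𝓝[>] (0:ℝ), Real.log 8 / δ ≤ Real.log (1/ε) :=
      hT.eventually_ge_atTop _
    have hev4 : ∀ᶠ ε in 𝓝[>] (0:ℝ), ε ∈ Set.Ioo (0:ℝ) 1 :=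
      Ioo_mem_nhdsGT_of_mem ⟨le_refl 0, zero_lt_one⟩
    have hfinal : ∀ᶠ ε in 𝓝[>] (0:ℝ), u12 ε ≤ M + 2 * δ := by
      filter_upwards [hev1, hev2, hev3, hev4] with ε h1 h2 h3 h4
      obtain ⟨hε0, hε1⟩ := h4
      have hLpos : 0 < Real.log (1/ε) := Real.log_pos (by rw [lt_div_iff₀ hε0]; linarith)
      set N1 := covNum (graphOver f (Set.Icc 0 1)) ε with hN1
      set N2 := covNum (graphOver g (Set.Icc 0 1)) ε with hN2
      set N12 := covNum (graphOver (f + g) (Set.Icc 0 1)) ε with hN12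
      have hN1p : 1 ≤ N1 := one_le_covNum (graph_compact hf) (graph_nonempty f) hε0
      have hN2p : 1 ≤ N2 := one_le_covNum (graph_compact hg) (graph_nonempty g) hε0
      have hN12p : 1 ≤ N12 := one_le_covNum (graph_compact (hf.add hg)) (graph_nonempty _) hε0
      have hkey := key_count f g hf hg hε0
      have hmaxpos : (0:ℝ) < max (N1:ℝ) (N2:ℝ) := by
        have : (1:ℝ) ≤ (N1:ℝ) := by exact_mod_cast hN1p
        exact lt_of_lt_of_le zero_lt_one (le_trans this (le_max_left _ _))
      have hcast : ((max N1 N2 : ℕ) : ℝ) = max (N1:ℝ) (N2:ℝ) := Nat.cast_max N1 N2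
      rw [hcast] at hkey
      have hlog : Real.log N12 ≤ Real.log 8 + Real.log (max (N1:ℝ) (N2:ℝ)) := by
        calc Real.log N12 ≤ Real.log (8 * max (N1:ℝ) (N2:ℝ)) := by
              apply Real.log_le_log (by exact_mod_cast hN12p) hkey
        _ = Real.log 8 + Real.log (max (N1:ℝ) (N2:ℝ)) :=
              Real.log_mul (by norm_num) (ne_of_gt hmaxpos)
      have hlogmax : Real.log (max (N1:ℝ) (N2:ℝ)) = max (Real.log N1) (Real.log N2) := by
        rcases le_total (N1:ℝ) (N2:ℝ) with hle | hle
        · rw [max_eq_right hle, max_eq_right]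
          apply Real.log_le_log (by exact_mod_cast hN1p) hle
        · rw [max_eq_left hle, max_eq_left]
          apply Real.log_le_log (by exact_mod_cast hN2p) hle
      have hdiv : u12 ε ≤ Real.log 8 / Real.log (1/ε) + max (u1 ε) (u2 ε) := by
        have : max (u1 ε) (u2 ε) = max (Real.log N1) (Real.log N2) / Real.log (1/ε) :=
          max_div_div_right hLpos.le _ _
        rw [this, ← add_div]
        apply div_le_div_of_nonneg_right _ hLpos.le
        · rw [← hlogmax]; exact hlog
      have hlog8 : Real.log 8 / Real.log (1/ε) ≤ δ := by
        rw [div_le_iff₀ hLpos]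
        have h8 : (0:ℝ) < Real.log 8 := Real.log_pos (by norm_num)
        calc Real.log 8 = δ * (Real.log 8 / δ) := by field_simp
        _ ≤ δ * Real.log (1/ε) := by gcongr
      calc u12 ε ≤ Real.log 8 / Real.log (1/ε) + max (u1 ε) (u2 ε) := hdiv
      _ ≤ δ + max (udim (graphOver f (Set.Icc 0 1)) + δ)
            (udim (graphOver g (Set.Icc 0 1)) + δ) := by
          apply add_le_add hlog8
          exact max_le_max h1.le h2.le
      _ = M + 2 * δ := by rw [max_add_add_right]; ring
    exact limsup_le_of_le hCo hfinal
  show limsup u12 (𝓝[>] (0:ℝ)) ≤ M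
  by_contra hc
  push_neg at hc
  have := key ((limsup u12 (𝓝[>] (0:ℝ)) - M) / 4) (by linarith)
  linarith

theorem stmt9 (f g : ℝ → ℝ)
    (hf : ContinuousOn f (Set.Icc 0 1)) (hg : ContinuousOn g (Set.Icc 0 1))
    (hex : udim (graphOver f (Set.Icc 0 1)) = ldim (graphOver f (Set.Icc 0 1))) :
    udim (graphOver (f + g) (Set.Icc 0 1))
      ≤ max (udim (graphOver f (Set.Icc 0 1))) (udim (graphOver g (Set.Icc 0 1))) ∧
    (udim (graphOver f (Set.Icc 0 1)) ≠ udim (graphOver g (Set.Icc 0 1)) →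
      udim (graphOver (f + g) (Set.Icc 0 1))
        = max (udim (graphOver f (Set.Icc 0 1))) (udim (graphOver g (Set.Icc 0 1)))) := by
  have main := udim_add_le_max f g hf hg
  refine ⟨main, fun hne => ?_⟩
  rcases hne.lt_or_gt with hlt | hlt
  · -- udim G f < udim G g
    have h3 := udim_add_le_max (f + g) (-f) (hf.add hg) hf.neg
    have heq : (f + g) + (-f) = g := by funext t; simp only [Pi.add_apply, Pi.neg_apply]; ring
    rw [heq, udim_graph_neg f hf] at h3
    have hmax : max (udim (graphOver f (Set.Icc 0 1))) (udim (graphOver g (Set.Icc 0 1)))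
        = udim (graphOver g (Set.Icc 0 1)) := max_eq_right hlt.le
    rw [hmax] at main ⊢
    refine le_antisymm main ?_
    by_contra hc
    push_neg at hc
    have : max (udim (graphOver (f + g) (Set.Icc 0 1))) (udim (graphOver f (Set.Icc 0 1)))
        < udim (graphOver g (Set.Icc 0 1)) := max_lt hc hlt
    linarith [h3]
  · -- udim G g < udim G f
    have h3 := udim_add_le_max (f + g) (-g) ((hf.add hg)) hg.neg
    have heq : (f + g) + (-g) = f := by funext t; simp only [Pi.add_apply, Pi.neg_apply]; ring
    rw [heq, udim_graph_neg g hg] at h3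
    have hmax : max (udim (graphOver f (Set.Icc 0 1))) (udim (graphOver g (Set.Icc 0 1)))
        = udim (graphOver f (Set.Icc 0 1)) := max_eq_left hlt.le
    rw [hmax] at main ⊢
    refine le_antisymm main ?_
    by_contra hc
    push_neg at hc
    have : max (udim (graphOver (f + g) (Set.Icc 0 1))) (udim (graphOver g (Set.Icc 0 1)))
        < udim (graphOver f (Set.Icc 0 1)) := max_lt hc hlt
    linarith [h3]
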